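/- arXiv:math/0511195 — 3 statements merged into one kernel-verified Lean document; each statement's English description precedes it below -/
import Mathlib

section
/- Let H be a bialgebra over a commutative ring R and let W = γ_r be the linear endomorphism of H ⊗ H determined by W(f ⊗ g) = Δ(f)(1 ⊗ g). Then W satisfies the pentagon equation of the Kac–Takesaki operator: as linear endomorphisms of H ⊗ H ⊗ H, W²³ ∘ W¹² = W¹² ∘ W¹³ ∘ W²³, where W¹² = W ⊗ id, W²³ = id ⊗ W, and W¹³ = (τ ⊗ id) ∘ (id ⊗ W) ∘ (τ ⊗ id) acts on the first and third tensor factors. (The paper derives this pentagon equation from the comodule property of the regular coaction in Section 6.) -/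
open TensorProduct

/-- The endomorphism of `H ⊗ H ⊗ H` acting as `W` on the first two tensor factors. -/
noncomputable def leg12 (R H : Type*) [CommRing R] [AddCommGroup H] [Module R H]
    (W : H ⊗[R] H →ₗ[R] H ⊗[R] H) :
    (H ⊗[R] H) ⊗[R] H →ₗ[R] (H ⊗[R] H) ⊗[R] H :=
  LinearMap.rTensor H W

/-- The endomorphism of `H ⊗ H ⊗ H` acting as `W` on the last two tensor factors. -/
noncomputable def leg23 (R H : Type*) [CommRing R] [AddCommGroup H] [Module R H]
    (W : H ⊗[R] H →ₗ[R] H ⊗[R] H) :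
    (H ⊗[R] H) ⊗[R] H →ₗ[R] (H ⊗[R] H) ⊗[R] H :=
  (TensorProduct.assoc R H H H).symm.toLinearMap ∘ₗ LinearMap.lTensor H W ∘ₗ
    (TensorProduct.assoc R H H H).toLinearMap

/-- The endomorphism of `H ⊗ H ⊗ H` acting as `W` on the first and third tensor factors,
defined as `(τ ⊗ id) ∘ (id ⊗ W) ∘ (τ ⊗ id)` where `τ` is the flip of the first two factors. -/
noncomputable def leg13 (R H : Type*) [CommRing R] [AddCommGroup H] [Module R H]
    (W : H ⊗[R] H →ₗ[R] H ⊗[R] H) :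
    (H ⊗[R] H) ⊗[R] H →ₗ[R] (H ⊗[R] H) ⊗[R] H :=
  LinearMap.rTensor H (TensorProduct.comm R H H).toLinearMap ∘ₗ leg23 R H W ∘ₗ
    LinearMap.rTensor H (TensorProduct.comm R H H).toLinearMap

/-- The pentagon equation for the Kac–Takesaki operator (Section 6 of the paper), in the unital
(bialgebra) setting: the Galois map `W = γ_r`, `W(f ⊗ g) = Δ(f)(1 ⊗ g)`, satisfies
`W²³ ∘ W¹² = W¹² ∘ W¹³ ∘ W²³` as linear endomorphisms of `H ⊗ H ⊗ H`. -/
theorem kac_takesaki_pentagon (R H : Type*) [CommRing R] [Ring H] [Bialgebra R H]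
    (W : H ⊗[R] H →ₗ[R] H ⊗[R] H)
    (hW : ∀ f g : H, W (f ⊗ₜ[R] g) = Coalgebra.comul (R := R) f * (1 ⊗ₜ[R] g)) :
    leg23 R H W ∘ₗ leg12 R H W = leg12 R H W ∘ₗ leg13 R H W ∘ₗ leg23 R H W := by
  ext f g h
  simp only [leg12, leg23, leg13, LinearMap.comp_apply, LinearEquiv.coe_coe,
    AlgebraTensorModule.curry_apply, curry_apply, LinearMap.coe_restrictScalars,
    LinearMap.rTensor_tmul, LinearMap.lTensor_tmul, assoc_tmul, assoc_symm_tmul,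
    comm_tmul, hW]
  set Δ := Coalgebra.comul (R := R) (A := H) with hΔ
  -- claim3
  have claim3 : ∀ (x : H ⊗[R] H) (v c e : H),
      (x * (1 ⊗ₜ[R] c)) ⊗ₜ[R] (v * e) =
        (TensorProduct.assoc R H H H).symm
          ((TensorProduct.assoc R H H H) (x ⊗ₜ[R] v) * (1 ⊗ₜ[R] (c ⊗ₜ[R] e))) := by
    intro x v c e
    induction x using TensorProduct.induction_on with
    | zero => simp
    | tmul p q =>
        simp [Algebra.TensorProduct.tmul_mul_tmul]
    | add x₁ x₂ h₁ h₂ =>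
        simp only [add_mul, add_tmul, map_add, h₁, h₂]
  -- claim2
  have claim2 : ∀ (y : H ⊗[R] H) (c e : H),
      (LinearMap.rTensor H W)
        ((LinearMap.rTensor H (TensorProduct.comm R H H).toLinearMap)
          ((TensorProduct.assoc R H H H).symm (c ⊗ₜ[R] (y * (1 ⊗ₜ[R] e))))) =
      (TensorProduct.assoc R H H H).symm
        ((TensorProduct.assoc R H H H) ((LinearMap.rTensor H Δ) y) * (1 ⊗ₜ[R] (c ⊗ₜ[R] e))) := by
    intro y c e
    induction y using TensorProduct.induction_on with
    | zero => simp
    | tmul u v =>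
        simp only [Algebra.TensorProduct.tmul_mul_tmul, one_mul, mul_one, assoc_symm_tmul,
          LinearMap.rTensor_tmul, LinearEquiv.coe_coe, comm_tmul, hW, ← hΔ]
        exact claim3 (Δ u) v c e
    | add y₁ y₂ h₁ h₂ =>
        simp only [add_mul, tmul_add, map_add, add_tmul, h₁, h₂]
  -- claim_L
  have claimL : ∀ (y : H ⊗[R] H),
      (LinearMap.lTensor H W) ((TensorProduct.assoc R H H H) ((y * (1 ⊗ₜ[R] g)) ⊗ₜ[R] h)) =
        (LinearMap.lTensor H Δ) y * (1 ⊗ₜ[R] (Δ g * (1 ⊗ₜ[R] h))) := by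
    intro y
    induction y using TensorProduct.induction_on with
    | zero => simp
    | tmul a b =>
        simp only [Algebra.TensorProduct.tmul_mul_tmul, one_mul, assoc_tmul,
          LinearMap.lTensor_tmul, hW, ← hΔ]
        rw [hΔ, Bialgebra.comul_mul, mul_assoc]
    | add y₁ y₂ h₁ h₂ =>
        simp only [add_mul, add_tmul, map_add, h₁, h₂]
  -- claim_R : handle general z in place of Δ g * (1 ⊗ h)
  have claimR : ∀ (z : H ⊗[R] H),
      (LinearMap.rTensor H W)
        ((LinearMap.rTensor H (TensorProduct.comm R H H).toLinearMap)
          ((TensorProduct.assoc R H H H).symm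
            ((LinearMap.lTensor H W)
              ((TensorProduct.assoc R H H H)
                ((LinearMap.rTensor H (TensorProduct.comm R H H).toLinearMap)
                  ((TensorProduct.assoc R H H H).symm (f ⊗ₜ[R] z))))))) =
      (TensorProduct.assoc R H H H).symm
        ((TensorProduct.assoc R H H H) ((LinearMap.rTensor H Δ) (Δ f)) * (1 ⊗ₜ[R] z)) := by
    intro z
    induction z using TensorProduct.induction_on with
    | zero => simp
    | tmul c e =>
        simp only [assoc_symm_tmul, LinearMap.rTensor_tmul, LinearEquiv.coe_coe, comm_tmul,
          assoc_tmul, LinearMap.lTensor_tmul, hW, ← hΔ]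
        exact claim2 (Δ f) c e
    | add z₁ z₂ h₁ h₂ =>
        simp only [tmul_add, map_add, mul_add, h₁, h₂]
  rw [claimL (Δ f), claimR (Δ g * (1 ⊗ₜ[R] h)), Coalgebra.coassoc_apply]
end

section
/- Let M be a Hausdorff, σ-compact, boundaryless smooth manifold modeled on a finite-dimensional real normed space, and let D(M) denote the space of smooth compactly supported functions M → ℂ, an algebra under pointwise multiplication. If L : D(M) → D(M) is a ℂ-linear map satisfying L(f·g) = L(f)·g for all f, g ∈ D(M), then there exists a unique smooth function h : M → ℂ such that L(f) = h·f (pointwise product) for all f ∈ D(M). (This is the paper's Lemma 9.1: the multiplier algebra of D(M) is the algebra E(M) of all smooth functions on M.) -/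
open scoped Manifold
open Filter Topology

/-!
Writing `L f * g = L (f * g) = L (g * f) = L g * f` and evaluating at a point `x` where `g x = 1`
shows `L f x = (L g) x * f x`. Hence `h x := (L φₓ) x`, for any bump function `φₓ` equal to `1`
near `x`, works; near `x` it coincides with the smooth function `L φₓ`, so `h` is smooth.
Uniqueness follows by testing against the same bump functions.
-/

/-- The space `𝒟(M)` of smooth compactly supported complex-valued functions on a manifold `M`,
as a `ℂ`-submodule of `M → ℂ`. -/
noncomputable def smoothCompactlySupported {E : Type*} [NormedAddCommGroup E] [NormedSpace ℝ E]
    {H : Type*} [TopologicalSpace H] (I : ModelWithCorners ℝ E H)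
    (M : Type*) [TopologicalSpace M] [ChartedSpace H M] : Submodule ℂ (M → ℂ) where
  carrier := {f | ContMDiff I 𝓘(ℝ, ℂ) (⊤ : ℕ∞) f ∧ HasCompactSupport f}
  zero_mem' := ⟨contMDiff_const, HasCompactSupport.zero⟩
  add_mem' := fun hf hg => ⟨hf.1.add hg.1, hf.2.add hg.2⟩
  smul_mem' := fun c f hf => by
    refine ⟨?_, hf.2.mono (Function.support_const_smul_subset c f)⟩
    have h2 : c • f = fun x => c * f x := by funext x; simp [smul_eq_mul]
    rw [h2]
    exact ((ContinuousLinearMap.mul ℝ ℂ c).contMDiff).comp hf.1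

def IsLeftMultiplier {E : Type*} [NormedAddCommGroup E] [NormedSpace ℝ E]
    {H : Type*} [TopologicalSpace H] {I : ModelWithCorners ℝ E H}
    {M : Type*} [TopologicalSpace M] [ChartedSpace H M]
    (L : smoothCompactlySupported I M →ₗ[ℂ] smoothCompactlySupported I M) : Prop :=
  ∀ f g fg : smoothCompactlySupported I M,
    (fg : M → ℂ) = (f : M → ℂ) * (g : M → ℂ) → (L fg : M → ℂ) = (L f : M → ℂ) * (g : M → ℂ)

namespace smoothCompactlySupported

variable {E : Type*} [NormedAddCommGroup E] [NormedSpace ℝ E]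
  {H : Type*} [TopologicalSpace H] {I : ModelWithCorners ℝ E H}
  {M : Type*} [TopologicalSpace M] [ChartedSpace H M]

theorem mul_mem {f g : M → ℂ} (hf : ContMDiff I 𝓘(ℝ, ℂ) (⊤ : ℕ∞) f)
    (hg : g ∈ smoothCompactlySupported I M) : f * g ∈ smoothCompactlySupported I M :=
  ⟨(contDiff_fst.mul contDiff_snd).contMDiff.comp (hf.prodMk_space hg.1), hg.2.mul_left⟩

theorem exists_eventuallyEq_one [FiniteDimensional ℝ E] [T2Space M] [IsManifold I (⊤ : ℕ∞) M]
    (c : M) : ∃ φ : smoothCompactlySupported I M, (φ : M → ℂ) =ᶠ[𝓝 c] 1 := by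
  obtain ⟨b⟩ : Nonempty (SmoothBumpFunction I c) := inferInstance
  refine ⟨⟨fun y => (b y : ℂ), Complex.ofRealCLM.contMDiff.comp b.contMDiff,
    b.hasCompactSupport.comp_left Complex.ofReal_zero⟩, ?_⟩
  filter_upwards [b.eventuallyEq_one] with y hy
  simp [hy]

theorem eq_of_forall_mul_eq [FiniteDimensional ℝ E] [T2Space M] [IsManifold I (⊤ : ℕ∞) M]
    {h₁ h₂ : M → ℂ} (h : ∀ f : smoothCompactlySupported I M, h₁ * f = h₂ * f) : h₁ = h₂ := by
  funext x
  obtain ⟨φ, hφ⟩ := exists_eventuallyEq_one (I := I) x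
  simpa [hφ.self_of_nhds] using congrFun (h φ) x

end smoothCompactlySupported

namespace IsLeftMultiplier

variable {E : Type*} [NormedAddCommGroup E] [NormedSpace ℝ E]
  {H : Type*} [TopologicalSpace H] {I : ModelWithCorners ℝ E H}
  {M : Type*} [TopologicalSpace M] [ChartedSpace H M]
  {L : smoothCompactlySupported I M →ₗ[ℂ] smoothCompactlySupported I M}

theorem mul_comm (hL : IsLeftMultiplier L) (f g : smoothCompactlySupported I M) :
    (L f : M → ℂ) * g = (L g : M → ℂ) * f := by
  let fg : smoothCompactlySupported I M := ⟨_, smoothCompactlySupported.mul_mem f.2.1 g.2⟩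
  exact (hL f g fg rfl).symm.trans (hL g f fg (_root_.mul_comm _ _))

theorem apply_eq_mul (hL : IsLeftMultiplier L) {φ : smoothCompactlySupported I M} {x : M}
    (hφ : (φ : M → ℂ) x = 1) (f : smoothCompactlySupported I M) :
    (L f : M → ℂ) x = (L φ : M → ℂ) x * (f : M → ℂ) x := by
  simpa [hφ, _root_.mul_comm] using congrFun (hL.mul_comm f φ) x

end IsLeftMultiplier

theorem leftMultiplier_eq_smooth_mul_general
    {E : Type*} [NormedAddCommGroup E] [NormedSpace ℝ E] [FiniteDimensional ℝ E]
    (I : ModelWithCorners ℝ E E)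
    (M : Type*) [TopologicalSpace M] [T2Space M]
    [ChartedSpace E M] [IsManifold I (⊤ : ℕ∞) M]
    (L : smoothCompactlySupported I M →ₗ[ℂ] smoothCompactlySupported I M)
    (hL : ∀ f g fg : smoothCompactlySupported I M,
      (fg : M → ℂ) = (f : M → ℂ) * (g : M → ℂ) →
      ((L fg : M → ℂ)) = (L f : M → ℂ) * (g : M → ℂ)) :
    ∃! h : M → ℂ, ContMDiff I 𝓘(ℝ, ℂ) (⊤ : ℕ∞) h ∧
      ∀ f : smoothCompactlySupported I M, ((L f : M → ℂ)) = h * (f : M → ℂ) := by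
  have hL : IsLeftMultiplier L := hL
  choose φ hφ using smoothCompactlySupported.exists_eventuallyEq_one (I := I) (M := M)
  set h : M → ℂ := fun x => (L (φ x) : M → ℂ) x
  have hL_eq (f : smoothCompactlySupported I M) : (L f : M → ℂ) = h * f :=
    funext fun x => hL.apply_eq_mul (hφ x).self_of_nhds f
  refine ⟨h, ⟨fun x => ?_, hL_eq⟩, fun h' hh' => ?_⟩
  · refine (L (φ x)).2.1.contMDiffAt.congr_of_eventuallyEq ?_
    filter_upwards [hφ x] with y hy
    simpa [hy] using (congrFun (hL_eq (φ x)) y).symm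
  · exact smoothCompactlySupported.eq_of_forall_mul_eq fun f => (hh'.2 f).symm.trans (hL_eq f)

/-- Lemma 9.1 of the paper: the multiplier algebra of `𝒟(M)` is `ℰ(M)`. If `M` is a Hausdorff,
σ-compact, boundaryless smooth manifold modeled on a finite-dimensional real normed space and
`L : 𝒟(M) → 𝒟(M)` is a `ℂ`-linear map with `L(f·g) = L(f)·g` for all `f, g ∈ 𝒟(M)`, then there
is a unique smooth function `h : M → ℂ` such that `L(f) = h·f` for all `f ∈ 𝒟(M)`. -/
theorem leftMultiplier_eq_smooth_mul
    {E : Type*} [NormedAddCommGroup E] [NormedSpace ℝ E] [FiniteDimensional ℝ E]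
    (I : ModelWithCorners ℝ E E) [I.Boundaryless]
    (M : Type*) [TopologicalSpace M] [T2Space M] [SigmaCompactSpace M]
    [ChartedSpace E M] [IsManifold I (⊤ : ℕ∞) M]
    (L : smoothCompactlySupported I M →ₗ[ℂ] smoothCompactlySupported I M)
    (hL : ∀ f g fg : smoothCompactlySupported I M,
      (fg : M → ℂ) = (f : M → ℂ) * (g : M → ℂ) →
      ((L fg : M → ℂ)) = (L f : M → ℂ) * (g : M → ℂ)) :
    ∃! h : M → ℂ, ContMDiff I 𝓘(ℝ, ℂ) (⊤ : ℕ∞) h ∧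
      ∀ f : smoothCompactlySupported I M, ((L f : M → ℂ)) = h * (f : M → ℂ) :=
  leftMultiplier_eq_smooth_mul_general I M L hL
end

section
/- Let L : 𝒮(ℝⁿ, ℂ) → 𝒮(ℝⁿ, ℂ) be a continuous linear map on the Schwartz space with its standard topology. Then L satisfies L(f·g) = L(f)·g (pointwise products) for all f, g ∈ 𝒮(ℝⁿ, ℂ) if and only if there exists a smooth function h : ℝⁿ → ℂ of temperate growth (i.e. for every order m there exist k ∈ ℕ and C ≥ 0 with ‖D^m h(x)‖ ≤ C(1+‖x‖)^k for all x) such that L(f) = h·f for all f ∈ 𝒮(ℝⁿ, ℂ). Moreover, for every such h the map f ↦ h·f is a continuous linear endomorphism of 𝒮(ℝⁿ, ℂ). (This is the paper's Lemma 10.2: the multiplier algebra of the Schwartz algebra with pointwise multiplication is the algebra of slowly increasing functions.) -/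
open scoped SchwartzMap


variable {E : Type*} [NormedAddCommGroup E] [InnerProductSpace ℝ E]

lemma sub_const_deriv_le (y x : E) (j : ℕ) (hj : 1 ≤ j) :
    ‖iteratedFDeriv ℝ j (fun x : E => x - y) x‖ ≤ 1 := by
  obtain ⟨j, rfl⟩ := Nat.exists_eq_add_of_le hj
  rw [add_comm 1 j, ← norm_iteratedFDeriv_fderiv]
  have hfd : (fderiv ℝ (fun x : E => x - y)) = fun _ => ContinuousLinearMap.id ℝ E := by
    funext z
    rw [fderiv_sub_const]; exact fderiv_id'
  rw [hfd]
  rcases Nat.eq_zero_or_pos j with rfl | hjpos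
  · rw [norm_iteratedFDeriv_zero]
    simpa using ContinuousLinearMap.norm_id_le
  · rw [iteratedFDeriv_const_of_ne (Nat.pos_iff_ne_zero.mp hjpos)]
    simp

lemma normsq_deriv_le (y x : E) (i : ℕ) (hi : 1 ≤ i) :
    ‖iteratedFDeriv ℝ i (fun x : E => ‖x - y‖ ^ 2) x‖ ≤ (2 * (1 + ‖x - y‖) ^ 2) ^ i := by
  have hw : ContDiff ℝ (⊤ : ℕ∞) (fun x : E => x - y) := contDiff_id.sub contDiff_const
  have heq : (fun x : E => ‖x - y‖ ^ 2) =
      fun z : E => (innerSL ℝ) (z - y) (z - y) := by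
    funext z
    rw [innerSL_apply_apply, real_inner_self_eq_norm_sq]
  rw [heq]
  have key := (innerSL ℝ (E := E)).norm_iteratedFDeriv_le_of_bilinear hw hw x (n := i)
    ((mod_cast le_top))
  refine key.trans ?_
  have hr : (0:ℝ) ≤ ‖x - y‖ := norm_nonneg _
  have hterm : ∀ j, ‖iteratedFDeriv ℝ j (fun x : E => x - y) x‖ ≤ 1 + ‖x - y‖ := by
    intro j
    rcases Nat.eq_zero_or_pos j with rfl | hj
    · rw [norm_iteratedFDeriv_zero]; linarith
    · linarith [sub_const_deriv_le y x j hj]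
  have hsum : ∑ j ∈ Finset.range (i + 1), (i.choose j : ℝ) *
      ‖iteratedFDeriv ℝ j (fun x : E => x - y) x‖ *
      ‖iteratedFDeriv ℝ (i - j) (fun x : E => x - y) x‖ ≤
      2 ^ i * (1 + ‖x - y‖) ^ 2 := by
    calc ∑ j ∈ Finset.range (i + 1), (i.choose j : ℝ) *
        ‖iteratedFDeriv ℝ j (fun x : E => x - y) x‖ *
        ‖iteratedFDeriv ℝ (i - j) (fun x : E => x - y) x‖
        ≤ ∑ j ∈ Finset.range (i + 1), (i.choose j : ℝ) * ((1 + ‖x - y‖) * (1 + ‖x - y‖)) := by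
          refine Finset.sum_le_sum fun j _ => ?_
          rw [mul_assoc]
          refine mul_le_mul_of_nonneg_left ?_ (by positivity)
          exact mul_le_mul (hterm j) (hterm (i - j)) (norm_nonneg _) (by positivity)
      _ = 2 ^ i * (1 + ‖x - y‖) ^ 2 := by
          rw [← Finset.sum_mul, ← Nat.cast_sum, Nat.sum_range_choose]
          push_cast; ring
  calc ‖innerSL ℝ (E := E)‖ * ∑ j ∈ Finset.range (i + 1), (i.choose j : ℝ) *
      ‖iteratedFDeriv ℝ j (fun x : E => x - y) x‖ *
      ‖iteratedFDeriv ℝ (i - j) (fun x : E => x - y) x‖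
      ≤ 1 * (2 ^ i * (1 + ‖x - y‖) ^ 2) := by
        refine mul_le_mul (norm_innerSL_le ℝ) hsum ?_ zero_le_one
        positivity
    _ = 2 ^ i * (1 + ‖x - y‖) ^ 2 := one_mul _
    _ ≤ 2 ^ i * ((1 + ‖x - y‖) ^ 2) ^ i := by
        refine mul_le_mul_of_nonneg_left ?_ (by positivity)
        exact le_self_pow₀ (by nlinarith) (by omega)
    _ = (2 * (1 + ‖x - y‖) ^ 2) ^ i := by rw [mul_pow]

lemma exp_deriv_norm_le (c t : ℝ) (hc : |c| ≤ 1) (i : ℕ) :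
    ‖iteratedFDeriv ℝ i (fun s : ℝ => Real.exp (c * s)) t‖ ≤ Real.exp (c * t) := by
  rw [norm_iteratedFDeriv_eq_norm_iteratedDeriv, iteratedDeriv_exp_const_mul]
  rw [Real.norm_eq_abs, abs_mul, abs_pow, Real.abs_exp]
  calc |c| ^ i * Real.exp (c * t) ≤ 1 ^ i * Real.exp (c * t) := by
        refine mul_le_mul_of_nonneg_right ?_ (Real.exp_nonneg _)
        exact pow_le_pow_left₀ (abs_nonneg c) hc i
    _ = Real.exp (c * t) := by rw [one_pow, one_mul]

lemma gauss_deriv_le (c : ℝ) (hc : |c| ≤ 1) (y x : E) (m : ℕ) :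
    ‖iteratedFDeriv ℝ m (fun x : E => Real.exp (c * ‖x - y‖ ^ 2)) x‖ ≤
      (m.factorial : ℝ) * Real.exp (c * ‖x - y‖ ^ 2) * (2 * (1 + ‖x - y‖) ^ 2) ^ m := by
  have hq : ContDiff ℝ (⊤ : ℕ∞) (fun x : E => ‖x - y‖ ^ 2) :=
    (contDiff_id.sub contDiff_const).norm_sq ℝ
  have hg : ContDiff ℝ (⊤ : ℕ∞) (fun s : ℝ => Real.exp (c * s)) :=
    Real.contDiff_exp.comp (contDiff_const.mul contDiff_id)
  have heq : (fun x : E => Real.exp (c * ‖x - y‖ ^ 2)) =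
      (fun s : ℝ => Real.exp (c * s)) ∘ (fun x : E => ‖x - y‖ ^ 2) := rfl
  rw [heq]
  refine norm_iteratedFDeriv_comp_le hg hq (mod_cast le_top) x ?_ ?_
  · intro i _
    exact exp_deriv_norm_le c _ hc i
  · intro i hi _
    exact normsq_deriv_le y x i hi

lemma poly_gauss_le (p : ℕ) (a : ℝ) (ha : 0 ≤ a) :
    (1 + a) ^ p * Real.exp (-1 * a ^ 2) ≤ Real.exp ((p : ℝ) ^ 2 / 4) := by
  have h1 : (1 + a) ^ p ≤ Real.exp ((p : ℝ) * a) := by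
    calc (1 + a) ^ p ≤ (Real.exp a) ^ p := by
          refine pow_le_pow_left₀ (by linarith) ?_ p
          linarith [Real.add_one_le_exp a]
      _ = Real.exp ((p : ℝ) * a) := by rw [← Real.exp_nat_mul]
  calc (1 + a) ^ p * Real.exp (-1 * a ^ 2)
      ≤ Real.exp ((p : ℝ) * a) * Real.exp (-1 * a ^ 2) := by
        refine mul_le_mul_of_nonneg_right h1 (Real.exp_nonneg _)
    _ = Real.exp ((p : ℝ) * a + -1 * a ^ 2) := (Real.exp_add _ _).symm
    _ ≤ Real.exp ((p : ℝ) ^ 2 / 4) := by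
        refine Real.exp_le_exp.mpr ?_
        nlinarith [sq_nonneg (a - (p : ℝ) / 2)]

lemma ofReal_comp_norm_iteratedFDeriv {f : E → ℝ} (hf : ContDiff ℝ (⊤ : ℕ∞) f) (m : ℕ) (x : E) :
    ‖iteratedFDeriv ℝ m (fun x => (f x : ℂ)) x‖ = ‖iteratedFDeriv ℝ m f x‖ := by
  have : (fun x => (f x : ℂ)) = ⇑Complex.ofRealLI ∘ f := rfl
  rw [this]
  exact Complex.ofRealLI.norm_iteratedFDeriv_comp_left (hf.contDiffAt (x := x)) (mod_cast le_top)

lemma gauss_decay_bound (y : E) (k m : ℕ) (x : E) :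
    ‖x‖ ^ k * ‖iteratedFDeriv ℝ m (fun x : E => ((Real.exp (-1 * ‖x - y‖ ^ 2) : ℝ) : ℂ)) x‖ ≤
      (m.factorial : ℝ) * 2 ^ m * Real.exp (((k + 2 * m : ℕ) : ℝ) ^ 2 / 4)
      * (1 + ‖y‖) ^ k := by
    have hsm : ContDiff ℝ (⊤ : ℕ∞) (fun x : E => Real.exp (-1 * ‖x - y‖ ^ 2)) :=
      Real.contDiff_exp.comp
        (contDiff_const.mul ((contDiff_id.sub contDiff_const).norm_sq ℝ))
    rw [ofReal_comp_norm_iteratedFDeriv hsm]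
    set r := ‖x - y‖ with hr
    have hr0 : 0 ≤ r := norm_nonneg _
    have hx : ‖x‖ ≤ (1 + r) * (1 + ‖y‖) := by
      have := norm_sub_norm_le x y
      nlinarith [norm_nonneg y]
    have hxk : ‖x‖ ^ k ≤ (1 + r) ^ k * (1 + ‖y‖) ^ k := by
      rw [← mul_pow]
      exact pow_le_pow_left₀ (norm_nonneg x) hx k
    have hd := gauss_deriv_le (-1) (by norm_num) y x m
    have hand : (1 + r) ^ (k + 2 * m) * Real.exp (-1 * r ^ 2) ≤
        Real.exp (((k + 2 * m : ℕ) : ℝ) ^ 2 / 4) := poly_gauss_le (k + 2 * m) r hr0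
    calc ‖x‖ ^ k * ‖iteratedFDeriv ℝ m (fun x : E => Real.exp (-1 * ‖x - y‖ ^ 2)) x‖
        ≤ ((1 + r) ^ k * (1 + ‖y‖) ^ k) *
          ((m.factorial : ℝ) * Real.exp (-1 * r ^ 2) * (2 * (1 + r) ^ 2) ^ m) := by
          refine mul_le_mul hxk hd (norm_nonneg _) (by positivity)
      _ = (m.factorial : ℝ) * 2 ^ m * ((1 + r) ^ (k + 2 * m) * Real.exp (-1 * r ^ 2))
          * (1 + ‖y‖) ^ k := by
          rw [mul_pow, ← pow_mul, pow_add]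
          ring
      _ ≤ (m.factorial : ℝ) * 2 ^ m * Real.exp (((k + 2 * m : ℕ) : ℝ) ^ 2 / 4)
          * (1 + ‖y‖) ^ k := by
          refine mul_le_mul_of_nonneg_right ?_ (by positivity)
          exact mul_le_mul_of_nonneg_left hand (by positivity)


noncomputable def gaussMap (y : E) : SchwartzMap E ℂ where
  toFun := fun x => ((Real.exp (-1 * ‖x - y‖ ^ 2) : ℝ) : ℂ)
  smooth' := by
    refine Complex.ofRealCLM.contDiff.comp ?_
    exact Real.contDiff_exp.comp
      (contDiff_const.mul ((contDiff_id.sub contDiff_const).norm_sq ℝ))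
  decay' := fun k m => ⟨_, gauss_decay_bound y k m⟩

@[simp] lemma gaussMap_apply (y x : E) :
    gaussMap y x = ((Real.exp (-1 * ‖x - y‖ ^ 2) : ℝ) : ℂ) := rfl

lemma gaussMap_self (y : E) : gaussMap y y = 1 := by
  simp [gaussMap_apply]

lemma gaussMap_ne_zero (y x : E) : gaussMap y x ≠ 0 := by
  simp [gaussMap_apply, Real.exp_ne_zero]

lemma gaussMap_seminorm_le (k m : ℕ) (y : E) :
    SchwartzMap.seminorm ℂ k m (gaussMap y) ≤
      (m.factorial : ℝ) * 2 ^ m * Real.exp (((k + 2 * m : ℕ) : ℝ) ^ 2 / 4)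
      * (1 + ‖y‖) ^ k :=
  SchwartzMap.seminorm_le_bound ℂ k m (gaussMap y) (by positivity)
    (gauss_decay_bound y k m)

lemma schwartz_hasTemperateGrowth {F : Type*} [NormedAddCommGroup F] [NormedSpace ℝ F]
    {D : Type*} [NormedAddCommGroup D] [NormedSpace ℝ D]
    (f : SchwartzMap D F) : Function.HasTemperateGrowth ⇑f := by
  refine ⟨f.smooth ⊤, fun n => ⟨0, SchwartzMap.seminorm ℝ 0 n f, fun x => ?_⟩⟩
  simpa using f.norm_iteratedFDeriv_le_seminorm ℝ n x

lemma exp_pos_deriv_at_center (y : E) (m : ℕ) :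
    ‖iteratedFDeriv ℝ m (fun x : E => ((Real.exp (1 * ‖x - y‖ ^ 2) : ℝ) : ℂ)) y‖ ≤
      (m.factorial : ℝ) * 2 ^ m := by
  have hsm : ContDiff ℝ (⊤ : ℕ∞) (fun x : E => Real.exp (1 * ‖x - y‖ ^ 2)) :=
    Real.contDiff_exp.comp
      (contDiff_const.mul ((contDiff_id.sub contDiff_const).norm_sq ℝ))
  rw [ofReal_comp_norm_iteratedFDeriv hsm]
  have heq : (fun x : E => Real.exp (1 * ‖x - y‖ ^ 2)) =
      (fun s : ℝ => Real.exp (1 * s)) ∘ (fun x : E => ‖x - y‖ ^ 2) := rfl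
  rw [heq]
  have key := norm_iteratedFDeriv_comp_le (n := m) (N := (⊤ : WithTop ℕ∞))
    (g := fun s : ℝ => Real.exp (1 * s)) (f := fun x : E => ‖x - y‖ ^ 2)
    (Real.contDiff_exp.comp (contDiff_const.mul contDiff_id))
    ((contDiff_id.sub contDiff_const).norm_sq ℝ) (mod_cast le_top) y
    (C := 1) (D := 2) ?_ ?_
  · calc _ ≤ (m.factorial : ℝ) * 1 * 2 ^ m := key
      _ = (m.factorial : ℝ) * 2 ^ m := by ring
  · intro i _
    have := exp_deriv_norm_le 1 ((fun x : E => ‖x - y‖ ^ 2) y) (by norm_num) i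
    simpa using this
  · intro i hi _
    have := normsq_deriv_le y y i hi
    simpa using this

open SchwartzMap in
lemma L_gauss_deriv_bound [CompleteSpace E]
    (L : SchwartzMap E ℂ →L[ℂ] SchwartzMap E ℂ) (i : ℕ) :
    ∃ (k : ℕ) (C : ℝ), 0 ≤ C ∧ ∀ (y x : E),
      ‖iteratedFDeriv ℝ i (⇑(L (gaussMap y))) x‖ ≤ C * (1 + ‖y‖) ^ k := by
  classical
  set p := schwartzSeminormFamily ℂ E ℂ with hp
  set q : Seminorm ℂ (SchwartzMap E ℂ) := (SchwartzMap.seminorm ℂ 0 i).comp L.toLinearMap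
    with hqdef
  have hqc : Continuous ⇑q := by
    have h1 : Continuous ⇑(SchwartzMap.seminorm ℂ 0 i : Seminorm ℂ (SchwartzMap E ℂ)) :=
      (schwartz_withSeminorms ℂ E ℂ).continuous_seminorm (0, i)
    exact h1.comp L.continuous
  obtain ⟨s, C, hC, hq⟩ := Seminorm.bound_of_continuous (schwartz_withSeminorms ℂ E ℂ) q hqc
  set K := s.sup (fun j : ℕ × ℕ => j.1) with hK
  set A := ∑ j ∈ s, (j.2.factorial : ℝ) * 2 ^ j.2 *
    Real.exp (((j.1 + 2 * j.2 : ℕ) : ℝ) ^ 2 / 4) with hA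
  have hA0 : 0 ≤ A := Finset.sum_nonneg fun j _ => by positivity
  refine ⟨K, (C : ℝ) * A, by positivity, fun y x => ?_⟩
  have hy1 : (1 : ℝ) ≤ 1 + ‖y‖ := by linarith [norm_nonneg y]
  have hsup : (s.sup p) (gaussMap y) ≤ A * (1 + ‖y‖) ^ K := by
    refine Seminorm.finset_sup_apply_le (by positivity) fun j hj => ?_
    have h1 : p j (gaussMap y) ≤ (j.2.factorial : ℝ) * 2 ^ j.2 *
        Real.exp (((j.1 + 2 * j.2 : ℕ) : ℝ) ^ 2 / 4) * (1 + ‖y‖) ^ j.1 :=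
      gaussMap_seminorm_le j.1 j.2 y
    refine h1.trans ?_
    have h2 : (1 + ‖y‖) ^ j.1 ≤ (1 + ‖y‖) ^ K :=
      pow_le_pow_right₀ hy1 (Finset.le_sup (f := fun j : ℕ × ℕ => j.1) hj)
    have h3 : (j.2.factorial : ℝ) * 2 ^ j.2 *
        Real.exp (((j.1 + 2 * j.2 : ℕ) : ℝ) ^ 2 / 4) ≤ A :=
      Finset.single_le_sum (f := fun j : ℕ × ℕ => (j.2.factorial : ℝ) * 2 ^ j.2 *
        Real.exp (((j.1 + 2 * j.2 : ℕ) : ℝ) ^ 2 / 4)) (fun j _ => by positivity) hj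
    exact mul_le_mul h3 h2 (by positivity) hA0
  calc ‖iteratedFDeriv ℝ i (⇑(L (gaussMap y))) x‖
      ≤ SchwartzMap.seminorm ℂ 0 i (L (gaussMap y)) := by
        simpa using (L (gaussMap y)).norm_iteratedFDeriv_le_seminorm ℂ i x
    _ = q (gaussMap y) := rfl
    _ ≤ (C : ℝ) * (s.sup p) (gaussMap y) := by
        have := hq (gaussMap y)
        simpa [NNReal.smul_def, smul_eq_mul] using this
    _ ≤ (C : ℝ) * (A * (1 + ‖y‖) ^ K) := by
        exact mul_le_mul_of_nonneg_left hsup (by positivity)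
    _ = (C : ℝ) * A * (1 + ‖y‖) ^ K := by ring

example (h : E → ℂ) (hh : Function.HasTemperateGrowth h) (f : SchwartzMap E ℂ) (x : E) :
    (SchwartzMap.bilinLeftCLM (ContinuousLinearMap.mul ℝ ℂ) hh f) x = f x * h x := rfl

open SchwartzMap in
noncomputable def mulCLM {h : E → ℂ} (hh : Function.HasTemperateGrowth h) :
    SchwartzMap E ℂ →L[ℂ] SchwartzMap E ℂ :=
  letI base := SchwartzMap.bilinLeftCLM (ContinuousLinearMap.mul ℝ ℂ) hh
  { toFun := base
    map_add' := base.map_add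
    map_smul' := fun c f => by
      ext x
      have h1 : base (c • f) x = (c • f) x * h x := rfl
      have h2 : base f x = f x * h x := rfl
      rw [RingHom.id_apply, SchwartzMap.smul_apply, h1, SchwartzMap.smul_apply, h2,
        smul_mul_assoc]
    cont := base.cont }

lemma mulCLM_apply {h : E → ℂ} (hh : Function.HasTemperateGrowth h) (f : SchwartzMap E ℂ) :
    ⇑(mulCLM hh f) = h * ⇑f := by
  funext x
  show f x * h x = h x * f x
  ring

open SchwartzMap in
lemma forward_direction [CompleteSpace E]
    (L : SchwartzMap E ℂ →L[ℂ] SchwartzMap E ℂ)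
    (H : ∀ f g fg : SchwartzMap E ℂ, ⇑fg = ⇑f * ⇑g → ⇑(L fg) = ⇑(L f) * ⇑g) :
    ∃ h : E → ℂ, Function.HasTemperateGrowth h ∧
      ∀ f : SchwartzMap E ℂ, ⇑(L f) = h * ⇑f := by
  classical
  set h : E → ℂ := fun x => L (gaussMap x) x with hdef
  have claimA : ∀ (f : SchwartzMap E ℂ) (x : E), L f x = h x * f x := by
    intro f x
    set P := SchwartzMap.bilinLeftCLM (ContinuousLinearMap.mul ℝ ℂ)
      (schwartz_hasTemperateGrowth (gaussMap x)) f with hPdef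
    have hP1 : ⇑P = ⇑f * ⇑(gaussMap x) := rfl
    have hP2 : ⇑P = ⇑(gaussMap x) * ⇑f := by rw [hP1, mul_comm]
    have e1 := congrFun (H f (gaussMap x) P hP1) x
    have e2 := congrFun (H (gaussMap x) f P hP2) x
    simp only [Pi.mul_apply] at e1 e2
    calc L f x = L f x * gaussMap x x := by rw [gaussMap_self, mul_one]
      _ = L P x := e1.symm
      _ = L (gaussMap x) x * f x := e2
      _ = h x * f x := rfl
  have hformula : ∀ f : SchwartzMap E ℂ, ⇑(L f) = h * ⇑f := fun f =>
    funext fun x => by rw [Pi.mul_apply]; exact claimA f x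
  set u : E → E → ℂ := fun y x => ((Real.exp (1 * ‖x - y‖ ^ 2) : ℝ) : ℂ) with hu_def
  have hu : ∀ y, ContDiff ℝ ((⊤ : ℕ∞) : WithTop ℕ∞) (u y) := fun y =>
    Complex.ofRealCLM.contDiff.comp (Real.contDiff_exp.comp
      (contDiff_const.mul ((contDiff_id.sub contDiff_const).norm_sq ℝ)))
  have hid : ∀ y : E, h = fun x => (L (gaussMap y)) x * u y x := by
    intro y; funext x
    have h1 : L (gaussMap y) x = h x * gaussMap y x := claimA (gaussMap y) x
    rw [h1, gaussMap_apply, mul_assoc, ← Complex.ofReal_mul, ← Real.exp_add]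
    norm_num
  have hsmooth : ContDiff ℝ ((⊤ : ℕ∞) : WithTop ℕ∞) h := by
    rw [hid 0]
    exact ((L (gaussMap 0)).smooth ⊤).mul (hu 0)
  refine ⟨h, ⟨hsmooth, fun m => ?_⟩, hformula⟩
  choose k C hC0 hC using fun i => L_gauss_deriv_bound L i
  set K := (Finset.range (m + 1)).sup k with hK
  set Ct := ∑ i ∈ Finset.range (m + 1), (m.choose i : ℝ) * C i *
    (((m - i).factorial : ℝ) * 2 ^ (m - i)) with hCt
  refine ⟨K, Ct, fun y => ?_⟩
  have hy1 : (1 : ℝ) ≤ 1 + ‖y‖ := by linarith [norm_nonneg y]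
  have hrw : iteratedFDeriv ℝ m h y = iteratedFDeriv ℝ m
      (fun x => (ContinuousLinearMap.mul ℝ ℂ) ((L (gaussMap y)) x) (u y x)) y := by
    congr 1
    rw [hid y]
    funext x
    rw [ContinuousLinearMap.mul_apply']
  rw [hrw]
  have key := (ContinuousLinearMap.mul ℝ ℂ).norm_iteratedFDeriv_le_of_bilinear_of_le_one
    ((L (gaussMap y)).smooth ⊤) (hu y) y (n := m) (mod_cast le_top)
    (ContinuousLinearMap.opNorm_mul_le ℝ ℂ)
  refine key.trans ?_
  have hterm : ∀ i ∈ Finset.range (m + 1),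
      (m.choose i : ℝ) * ‖iteratedFDeriv ℝ i (⇑(L (gaussMap y))) y‖ *
        ‖iteratedFDeriv ℝ (m - i) (u y) y‖ ≤
      (m.choose i : ℝ) * C i * (((m - i).factorial : ℝ) * 2 ^ (m - i)) * (1 + ‖y‖) ^ K := by
    intro i hi
    have h1 := hC i y y
    have h2 := exp_pos_deriv_at_center y (m - i)
    have h3 : (1 + ‖y‖) ^ k i ≤ (1 + ‖y‖) ^ K :=
      pow_le_pow_right₀ hy1 (Finset.le_sup hi)
    calc (m.choose i : ℝ) * ‖iteratedFDeriv ℝ i (⇑(L (gaussMap y))) y‖ *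
        ‖iteratedFDeriv ℝ (m - i) (u y) y‖
        ≤ (m.choose i : ℝ) * (C i * (1 + ‖y‖) ^ k i) * (((m - i).factorial : ℝ) * 2 ^ (m - i)) := by
          refine mul_le_mul ?_ h2 (norm_nonneg _) (by have := hC0 i; positivity)
          exact mul_le_mul_of_nonneg_left h1 (by positivity)
      _ = (m.choose i : ℝ) * C i * (((m - i).factorial : ℝ) * 2 ^ (m - i)) * (1 + ‖y‖) ^ k i := by
          ring
      _ ≤ (m.choose i : ℝ) * C i * (((m - i).factorial : ℝ) * 2 ^ (m - i)) * (1 + ‖y‖) ^ K := by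
          refine mul_le_mul_of_nonneg_left h3 ?_
          have := hC0 i
          positivity
  calc ∑ i ∈ Finset.range (m + 1), (m.choose i : ℝ) *
      ‖iteratedFDeriv ℝ i (⇑(L (gaussMap y))) y‖ * ‖iteratedFDeriv ℝ (m - i) (u y) y‖
      ≤ ∑ i ∈ Finset.range (m + 1), (m.choose i : ℝ) * C i *
        (((m - i).factorial : ℝ) * 2 ^ (m - i)) * (1 + ‖y‖) ^ K :=
        Finset.sum_le_sum hterm
    _ = Ct * (1 + ‖y‖) ^ K := by rw [hCt, Finset.sum_mul]


/-- Lemma 10.2 of the paper: a continuous linear endomorphism `L` of the Schwartz space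
`𝒮(ℝⁿ, ℂ)` is a left multiplier for the pointwise product (i.e. `L(f·g) = L(f)·g` for all
Schwartz functions `f, g`) if and only if it is given by pointwise multiplication with a smooth
function of temperate growth (a slowly increasing function). Moreover, pointwise multiplication
by any such function is a continuous linear endomorphism of the Schwartz space. -/
theorem schwartz_multiplier_iff_temperate_growth (n : ℕ)
    (L : 𝓢(EuclideanSpace ℝ (Fin n), ℂ) →L[ℂ] 𝓢(EuclideanSpace ℝ (Fin n), ℂ)) :
    ((∀ f g fg : 𝓢(EuclideanSpace ℝ (Fin n), ℂ), ⇑fg = ⇑f * ⇑g → ⇑(L fg) = ⇑(L f) * ⇑g) ↔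
      ∃ h : EuclideanSpace ℝ (Fin n) → ℂ, Function.HasTemperateGrowth h ∧
        ∀ f : 𝓢(EuclideanSpace ℝ (Fin n), ℂ), ⇑(L f) = h * ⇑f) ∧
    ∀ h : EuclideanSpace ℝ (Fin n) → ℂ, Function.HasTemperateGrowth h →
      ∃ T : 𝓢(EuclideanSpace ℝ (Fin n), ℂ) →L[ℂ] 𝓢(EuclideanSpace ℝ (Fin n), ℂ),
        ∀ f : 𝓢(EuclideanSpace ℝ (Fin n), ℂ), ⇑(T f) = h * ⇑f := by
  constructor
  · constructor
    · exact forward_direction L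
    · rintro ⟨h, _, hL⟩ f g fg hfg
      rw [hL fg, hL f, hfg, mul_assoc, mul_comm h (⇑f * ⇑g), mul_assoc, mul_comm (⇑g) h,
        ← mul_assoc, mul_comm (⇑f) h]
  · intro h hh
    exact ⟨mulCLM hh, mulCLM_apply hh⟩
end
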